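/- Let c ∈ ℝ, r > 0, ε > 0, n ∈ ℕ with n ≥ 1, and w_1, …, w_n ∈ [c−r, c+r]. If Q(w_1), …, Q(w_n) are mutually independent outputs of the LDP-FL quantizer on inputs w_1, …, w_n, then E[((1/n)·Σ_{i=1}^n Q(w_i) − (1/n)·Σ_{i=1}^n w_i)²] = (1/n²)·Σ_{i=1}^n (r²·α(ε)² − (w_i − c)²) ≤ r²·α(ε)²/n. -/
import Mathlib
set_option maxHeartbeats 1000000


open Real Set

/-- `α(ε) = (e^ε + 1)/(e^ε − 1)`. -/
noncomputable def alphaFn (ε : ℝ) : ℝ := (Real.exp ε + 1) / (Real.exp ε - 1)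

lemma sum_pi_bool_prod {n : ℕ} (F : Fin n → Bool → ℝ) :
    ∑ s : Fin n → Bool, ∏ i, F i (s i) = ∏ i, (F i true + F i false) := by
  classical
  have h := Finset.prod_univ_sum (fun _ : Fin n => (Finset.univ : Finset Bool))
    (fun i b => F i b)
  simp only [Fintype.sum_bool, Fintype.piFinset_univ] at h
  rw [← h]

/-- if `Q(w_1), …, Q(w_n)` are mutually independent LDP-FL quantizer outputs
(the joint distribution over outcomes `s : Fin n → Bool` is the product of the marginals,
where `s i = true` means `Q(w_i) = c + r·α(ε)`), then the mean squared error of the average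
equals `(1/n²)·Σ_i (r²α(ε)² − (w_i − c)²)`, which is at most `r²α(ε)²/n`. -/
theorem stmt4 (c r ε : ℝ) (hr : 0 < r) (hε : 0 < ε)
    (n : ℕ) (hn : 1 ≤ n) (w : Fin n → ℝ)
    (hw : ∀ i, w i ∈ Icc (c - r) (c + r)) :
    (∑ s : Fin n → Bool,
        (∏ i, (if s i then 1 / 2 + (w i - c) / (2 * r * alphaFn ε)
               else 1 / 2 - (w i - c) / (2 * r * alphaFn ε))) *
          ((n : ℝ)⁻¹ * (∑ i, (if s i then c + r * alphaFn ε else c - r * alphaFn ε)) -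
              (n : ℝ)⁻¹ * (∑ i, w i)) ^ 2) =
      ((n : ℝ) ^ 2)⁻¹ * ∑ i, (r ^ 2 * alphaFn ε ^ 2 - (w i - c) ^ 2) ∧
    ((n : ℝ) ^ 2)⁻¹ * (∑ i, (r ^ 2 * alphaFn ε ^ 2 - (w i - c) ^ 2)) ≤
      r ^ 2 * alphaFn ε ^ 2 / (n : ℝ) := by
  classical
  have hexp : (1:ℝ) < Real.exp ε := by
    have := Real.add_one_le_exp ε; linarith
  have hα : 0 < alphaFn ε := div_pos (by linarith) (by linarith)
  set p : Fin n → Bool → ℝ := fun i b =>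
    if b then 1 / 2 + (w i - c) / (2 * r * alphaFn ε)
    else 1 / 2 - (w i - c) / (2 * r * alphaFn ε) with hpdef
  set X : Fin n → Bool → ℝ := fun i b =>
    (if b then c + r * alphaFn ε else c - r * alphaFn ε) - w i with hXdef
  set V : Fin n → ℝ := fun i => r ^ 2 * alphaFn ε ^ 2 - (w i - c) ^ 2 with hVdef
  have hp1 : ∀ k, p k true + p k false = 1 := by
    intro k; simp only [hpdef]; norm_num
  have h0 : ∀ k, p k true * X k true + p k false * X k false = 0 := by
    intro k; simp only [hpdef, hXdef]; norm_num
    field_simp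
    ring
  have h2 : ∀ k, p k true * X k true ^ 2 + p k false * X k false ^ 2 = V k := by
    intro k; simp only [hpdef, hXdef, hVdef]; norm_num
    field_simp
    ring
  have hinner : ∀ i j : Fin n,
      (∑ s : Fin n → Bool, (∏ k, p k (s k)) * (X i (s i) * X j (s j))) =
        if i = j then V i else 0 := by
    intro i j
    by_cases hij : i = j
    · subst hij
      simp only [if_pos rfl]
      have hrw : ∀ s : Fin n → Bool,
          (∏ k, p k (s k)) * (X i (s i) * X i (s i)) =
            ∏ k, (p k (s k) * (if k = i then X k (s k) ^ 2 else 1)) := by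
        intro s
        rw [Finset.prod_mul_distrib]
        congr 1
        rw [Finset.prod_ite_eq' Finset.univ i (fun k => X k (s k) ^ 2)]
        simp [sq]
      calc (∑ s : Fin n → Bool, (∏ k, p k (s k)) * (X i (s i) * X i (s i)))
          = ∑ s : Fin n → Bool, ∏ k, (p k (s k) * (if k = i then X k (s k) ^ 2 else 1)) := by
            exact Finset.sum_congr rfl fun s _ => hrw s
        _ = ∏ k, (p k true * (if k = i then X k true ^ 2 else 1) +
              p k false * (if k = i then X k false ^ 2 else 1)) :=
            sum_pi_bool_prod (fun k b => p k b * (if k = i then X k b ^ 2 else 1))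
        _ = ∏ k, (if k = i then V k else 1) := by
            refine Finset.prod_congr rfl fun k _ => ?_
            by_cases hk : k = i
            · simp only [if_pos hk]; exact h2 k
            · simp only [if_neg hk]; rw [mul_one, mul_one]; exact hp1 k
        _ = V i := by
            rw [Finset.prod_ite_eq' Finset.univ i V]; simp
    · simp only [if_neg hij]
      have hrw : ∀ s : Fin n → Bool,
          (∏ k, p k (s k)) * (X i (s i) * X j (s j)) =
            ∏ k, (p k (s k) * (if k = i then X k (s k) else 1) *
              (if k = j then X k (s k) else 1)) := by
        intro s
        rw [Finset.prod_mul_distrib, Finset.prod_mul_distrib]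
        rw [Finset.prod_ite_eq' Finset.univ i (fun k => X k (s k)),
            Finset.prod_ite_eq' Finset.univ j (fun k => X k (s k))]
        simp [mul_assoc]
      calc (∑ s : Fin n → Bool, (∏ k, p k (s k)) * (X i (s i) * X j (s j)))
          = ∑ s : Fin n → Bool, ∏ k, (p k (s k) * (if k = i then X k (s k) else 1) *
              (if k = j then X k (s k) else 1)) :=
            Finset.sum_congr rfl fun s _ => hrw s
        _ = ∏ k, (p k true * (if k = i then X k true else 1) *
              (if k = j then X k true else 1) +
              p k false * (if k = i then X k false else 1) *
              (if k = j then X k false else 1)) :=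
            sum_pi_bool_prod (fun k b => p k b * (if k = i then X k b else 1) *
              (if k = j then X k b else 1))
        _ = 0 := by
            apply Finset.prod_eq_zero (Finset.mem_univ i)
            simp only [if_pos rfl, if_neg hij]
            rw [mul_one, mul_one]
            exact h0 i
  constructor
  · have hstep : ∀ s : Fin n → Bool,
        (∏ i, (if s i then 1 / 2 + (w i - c) / (2 * r * alphaFn ε)
               else 1 / 2 - (w i - c) / (2 * r * alphaFn ε))) *
          ((n : ℝ)⁻¹ * (∑ i, (if s i then c + r * alphaFn ε else c - r * alphaFn ε)) -
              (n : ℝ)⁻¹ * (∑ i, w i)) ^ 2 =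
        ((n : ℝ) ^ 2)⁻¹ * ∑ i, ∑ j, (∏ k, p k (s k)) * (X i (s i) * X j (s j)) := by
      intro s
      have hq : (∏ i, (if s i then 1 / 2 + (w i - c) / (2 * r * alphaFn ε)
               else 1 / 2 - (w i - c) / (2 * r * alphaFn ε))) = ∏ k, p k (s k) := rfl
      have h1 : (n : ℝ)⁻¹ * (∑ i, (if s i then c + r * alphaFn ε else c - r * alphaFn ε)) -
          (n : ℝ)⁻¹ * (∑ i, w i) = (n : ℝ)⁻¹ * ∑ i, X i (s i) := by
        rw [← mul_sub, ← Finset.sum_sub_distrib]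
      have h3 : (∑ i, ∑ j, (∏ k, p k (s k)) * (X i (s i) * X j (s j))) =
          (∏ k, p k (s k)) * ∑ i, ∑ j, X i (s i) * X j (s j) := by
        rw [Finset.mul_sum]
        exact Finset.sum_congr rfl fun i _ => (Finset.mul_sum _ _ _).symm
      rw [hq, h1, h3, mul_pow, sq (∑ i, X i (s i)), Finset.sum_mul_sum, ← inv_pow]
      ring
    calc (∑ s : Fin n → Bool,
        (∏ i, (if s i then 1 / 2 + (w i - c) / (2 * r * alphaFn ε)
               else 1 / 2 - (w i - c) / (2 * r * alphaFn ε))) *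
          ((n : ℝ)⁻¹ * (∑ i, (if s i then c + r * alphaFn ε else c - r * alphaFn ε)) -
              (n : ℝ)⁻¹ * (∑ i, w i)) ^ 2)
        = ∑ s : Fin n → Bool,
            ((n : ℝ) ^ 2)⁻¹ * ∑ i, ∑ j, (∏ k, p k (s k)) * (X i (s i) * X j (s j)) :=
          Finset.sum_congr rfl fun s _ => hstep s
      _ = ((n : ℝ) ^ 2)⁻¹ * ∑ s : Fin n → Bool,
            ∑ i, ∑ j, (∏ k, p k (s k)) * (X i (s i) * X j (s j)) :=
          (Finset.mul_sum _ _ _).symm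
      _ = ((n : ℝ) ^ 2)⁻¹ * ∑ i, ∑ j, ∑ s : Fin n → Bool,
            (∏ k, p k (s k)) * (X i (s i) * X j (s j)) := by
          rw [Finset.sum_comm]
          congr 1
          exact Finset.sum_congr rfl fun i _ => Finset.sum_comm
      _ = ((n : ℝ) ^ 2)⁻¹ * ∑ i, ∑ j, (if i = j then V i else 0) := by
          congr 1
          exact Finset.sum_congr rfl fun i _ => Finset.sum_congr rfl fun j _ => hinner i j
      _ = ((n : ℝ) ^ 2)⁻¹ * ∑ i, V i := by
          congr 1
          refine Finset.sum_congr rfl fun i _ => ?_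
          simp
  · have hn' : (0:ℝ) < (n:ℝ) := by exact_mod_cast Nat.lt_of_lt_of_le Nat.zero_lt_one hn
    have hsum : (∑ i, V i) ≤ (n : ℝ) * (r ^ 2 * alphaFn ε ^ 2) := by
      calc (∑ i, V i)
          ≤ ∑ _i : Fin n, r ^ 2 * alphaFn ε ^ 2 :=
            Finset.sum_le_sum fun i _ => by
              simp only [hVdef]; nlinarith [sq_nonneg (w i - c)]
        _ = (n : ℝ) * (r ^ 2 * alphaFn ε ^ 2) := by
            simp [Finset.sum_const, nsmul_eq_mul]
    have h1 : ((n : ℝ) ^ 2)⁻¹ * (∑ i, V i) ≤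
        ((n : ℝ) ^ 2)⁻¹ * ((n : ℝ) * (r ^ 2 * alphaFn ε ^ 2)) :=
      mul_le_mul_of_nonneg_left hsum (by positivity)
    have h2 : ((n : ℝ) ^ 2)⁻¹ * ((n : ℝ) * (r ^ 2 * alphaFn ε ^ 2)) =
        r ^ 2 * alphaFn ε ^ 2 / (n : ℝ) := by
      field_simp
    linarith
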